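/- Let X, X′ be i.i.d. random variables on ℝ^m and Y, Y′ be i.i.d. random variables on ℝ^n, with X, X′, Y, Y′ independent where needed, and let μ and ν be symmetric Lévy measures on ℝ^m∖{0} and ℝ^n∖{0} with full support and associated continuous negative definite functions Φ and Ψ. Then, in [0,∞], V²(X,Y) ≤ E[Φ(X − X′)] · E[Ψ(Y − Y′)] ≤ 16 E[Φ(X)] · E[Ψ(Y)]. -/

import Mathlib

open MeasureTheory ProbabilityTheory
open scoped ENNReal RealInnerProductSpace

/-- `ρ` is a Lévy measure on `ℝ^d ∖ {0}`: it does not charge the origin and integrates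
`1 ∧ |r|²`. -/
def IsLevyMeasure {d : ℕ} (ρ : Measure (EuclideanSpace ℝ (Fin d))) : Prop :=
  ρ {0} = 0 ∧ ∫⁻ r, ENNReal.ofReal (min 1 (‖r‖ ^ 2)) ∂ρ < ∞

/-- `ρ` is symmetric: `ρ(B) = ρ(-B)` for all Borel sets `B`. -/
def IsSymmetricMeasure {d : ℕ} (ρ : Measure (EuclideanSpace ℝ (Fin d))) : Prop :=
  ρ.map (fun r => -r) = ρ

/-- `ρ` has full (topological) support on `ℝ^d ∖ {0}`. -/
def HasFullSupportOffZero {d : ℕ} (ρ : Measure (EuclideanSpace ℝ (Fin d))) : Prop :=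
  ∀ G : Set (EuclideanSpace ℝ (Fin d)), IsOpen G → G.Nonempty →
    (0 : EuclideanSpace ℝ (Fin d)) ∉ G → 0 < ρ G

/-- The real-valued continuous negative definite function
`Θ(u) = ∫ (1 - cos ⟪u, r⟫) ρ(dr)` associated to `ρ`, with values in `[0,∞]`. -/
noncomputable def levyCndf {d : ℕ} (ρ : Measure (EuclideanSpace ℝ (Fin d)))
    (u : EuclideanSpace ℝ (Fin d)) : ℝ≥0∞ :=
  ∫⁻ r, ENNReal.ofReal (1 - Real.cos ⟪u, r⟫) ∂ρ

/-- The characteristic function `f_U(r) = E[exp(i ⟪r, U⟫)]` of a random variable `U`. -/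
noncomputable def charFn {d : ℕ} {Ω : Type*} [MeasurableSpace Ω] (P : Measure Ω)
    (U : Ω → EuclideanSpace ℝ (Fin d)) (r : EuclideanSpace ℝ (Fin d)) : ℂ :=
  ∫ ω, Complex.exp (Complex.I * (⟪r, U ω⟫ : ℝ)) ∂P

/-- The joint characteristic function `f_{(X,Y)}(s,t) = E[exp(i(⟪s,X⟫ + ⟪t,Y⟫))]`. -/
noncomputable def jointCharFn {m n : ℕ} {Ω : Type*} [MeasurableSpace Ω] (P : Measure Ω)
    (X : Ω → EuclideanSpace ℝ (Fin m)) (Y : Ω → EuclideanSpace ℝ (Fin n))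
    (s : EuclideanSpace ℝ (Fin m)) (t : EuclideanSpace ℝ (Fin n)) : ℂ :=
  ∫ ω, Complex.exp (Complex.I * ((⟪s, X ω⟫ + ⟪t, Y ω⟫ : ℝ))) ∂P

/-- The generalized distance covariance
`V²(X,Y) = ∬ |f_{(X,Y)}(s,t) - f_X(s) f_Y(t)|² μ(ds) ν(dt)`, with values in `[0,∞]`. -/
noncomputable def gdCov {m n : ℕ} (μ : Measure (EuclideanSpace ℝ (Fin m)))
    (ν : Measure (EuclideanSpace ℝ (Fin n))) {Ω : Type*} [MeasurableSpace Ω]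
    (P : Measure Ω) (X : Ω → EuclideanSpace ℝ (Fin m))
    (Y : Ω → EuclideanSpace ℝ (Fin n)) : ℝ≥0∞ :=
  ∫⁻ s, ∫⁻ t,
    (‖jointCharFn P X Y s t - charFn P X s * charFn P Y t‖₊ : ℝ≥0∞) ^ 2 ∂ν ∂μ

/-!
With `U = exp (i⟪s, X⟫)` and `V = exp (i⟪t, Y⟫)`, the integrand of `V²(X,Y)` is the squared
covariance `|E[UV] - E[U] E[V]|²`, which Cauchy–Schwarz bounds by `Var U · Var V`. Since `|U| = 1`,
`Var U = 1 - |f_X(s)|²`, and for an independent copy `X'` of `X` this equals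
`E[1 - cos ⟪s, X - X'⟫]`. Integrating over `μ ⊗ ν` and exchanging the integrals (Lévy measures are
σ-finite) gives the first inequality. The second follows from
`1 - cos (α - β) ≤ 2 (1 - cos α) + 2 (1 - cos β)`, i.e. `Φ(u - v) ≤ 2 Φ(u) + 2 Φ(v)`.
-/

lemma one_sub_cos_sub_le (α β : ℝ) :
    1 - Real.cos (α - β) ≤ 2 * (1 - Real.cos α) + 2 * (1 - Real.cos β) := by
  -- the difference of the two sides is at least `(cos α + cos β - 2)² / 2`
  nlinarith [Real.cos_sub α β, Real.sin_sq_add_cos_sq α, Real.sin_sq_add_cos_sq β,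
    sq_nonneg (Real.sin α + Real.sin β), sq_nonneg (Real.cos α + Real.cos β - 2)]

section Levy

variable {d : ℕ} {ρ : Measure (EuclideanSpace ℝ (Fin d))}

lemma IsLevyMeasure.measure_setOf_le_norm_lt_top (hρ : IsLevyMeasure ρ) {ε : ℝ} (hε : 0 < ε) :
    ρ {r | ε ≤ ‖r‖} < ∞ := by
  have hc : 0 < min 1 (ε ^ 2) := by positivity
  calc ρ {r | ε ≤ ‖r‖}
      ≤ ρ {r | ENNReal.ofReal (min 1 (ε ^ 2)) ≤ ENNReal.ofReal (min 1 (‖r‖ ^ 2))} :=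
        measure_mono fun r hr => ENNReal.ofReal_le_ofReal <|
          min_le_min le_rfl (pow_le_pow_left₀ hε.le hr 2)
    _ ≤ (∫⁻ r, ENNReal.ofReal (min 1 (‖r‖ ^ 2)) ∂ρ) / ENNReal.ofReal (min 1 (ε ^ 2)) :=
        meas_ge_le_lintegral_div (by fun_prop) (ENNReal.ofReal_pos.2 hc).ne' ENNReal.ofReal_ne_top
    _ < ∞ := ENNReal.div_lt_top hρ.2.ne (ENNReal.ofReal_pos.2 hc).ne'

lemma IsLevyMeasure.sigmaFinite (hρ : IsLevyMeasure ρ) : SigmaFinite ρ := by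
  refine Measure.sigmaFinite_of_countable
    (S := insert {0} (Set.range fun n : ℕ => {r | 1 / (n + 1 : ℝ) ≤ ‖r‖}))
    ((Set.countable_range _).insert _) ?_ ?_
  · rintro s (rfl | ⟨n, rfl⟩)
    · simp [hρ.1]
    · exact hρ.measure_setOf_le_norm_lt_top (by positivity)
  · refine Set.eq_univ_of_forall fun r => ?_
    rcases eq_or_ne r 0 with rfl | hr
    · exact ⟨{0}, Set.mem_insert _ _, rfl⟩
    · obtain ⟨n, hn⟩ := exists_nat_one_div_lt (norm_pos_iff.2 hr)
      exact ⟨_, Set.mem_insert_of_mem _ ⟨n, rfl⟩, hn.le⟩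

lemma measurable_levyCndf [SFinite ρ] : Measurable (levyCndf ρ) :=
  Measurable.lintegral_prod_right'
    (f := fun p : EuclideanSpace ℝ (Fin d) × _ => ENNReal.ofReal (1 - Real.cos ⟪p.1, p.2⟫))
    (by fun_prop)

lemma levyCndf_sub_le (ρ : Measure (EuclideanSpace ℝ (Fin d))) (u v : EuclideanSpace ℝ (Fin d)) :
    levyCndf ρ (u - v) ≤ 2 * levyCndf ρ u + 2 * levyCndf ρ v := by
  calc levyCndf ρ (u - v)
      ≤ ∫⁻ r, (2 * ENNReal.ofReal (1 - Real.cos ⟪u, r⟫)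
          + 2 * ENNReal.ofReal (1 - Real.cos ⟪v, r⟫)) ∂ρ := by
        refine lintegral_mono fun r => ?_
        have hnonneg (x : ℝ) : 0 ≤ 2 * (1 - Real.cos x) :=
          mul_nonneg zero_le_two (sub_nonneg.2 (Real.cos_le_one x))
        rw [inner_sub_left]
        refine (ENNReal.ofReal_le_ofReal (one_sub_cos_sub_le _ _)).trans_eq ?_
        rw [ENNReal.ofReal_add (hnonneg _) (hnonneg _), ENNReal.ofReal_mul zero_le_two,
          ENNReal.ofReal_mul zero_le_two, ENNReal.ofReal_ofNat]
    _ = 2 * levyCndf ρ u + 2 * levyCndf ρ v := by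
        rw [lintegral_add_left (by fun_prop), lintegral_const_mul _ (by fun_prop),
          lintegral_const_mul _ (by fun_prop), levyCndf, levyCndf]

variable {Ω : Type*} [MeasurableSpace Ω]

lemma lintegral_levyCndf_sub_le [SFinite ρ] {P : Measure Ω} {X X' : Ω → EuclideanSpace ℝ (Fin d)}
    (hX : Measurable X) (hX' : Measurable X') (hid : IdentDistrib X X' P P) :
    ∫⁻ ω, levyCndf ρ (X ω - X' ω) ∂P ≤ 4 * ∫⁻ ω, levyCndf ρ (X ω) ∂P := by
  have hΦ := measurable_levyCndf (ρ := ρ)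
  have hΦX' : ∫⁻ ω, levyCndf ρ (X' ω) ∂P = ∫⁻ ω, levyCndf ρ (X ω) ∂P :=
    (hid.comp hΦ).lintegral_eq.symm
  calc ∫⁻ ω, levyCndf ρ (X ω - X' ω) ∂P
      ≤ ∫⁻ ω, (2 * levyCndf ρ (X ω) + 2 * levyCndf ρ (X' ω)) ∂P :=
        lintegral_mono fun ω => levyCndf_sub_le ρ _ _
    _ = 2 * ∫⁻ ω, levyCndf ρ (X ω) ∂P + 2 * ∫⁻ ω, levyCndf ρ (X' ω) ∂P := by
        rw [lintegral_add_left (by fun_prop), lintegral_const_mul 2 (by fun_prop),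
          lintegral_const_mul 2 (by fun_prop)]
    _ = 4 * ∫⁻ ω, levyCndf ρ (X ω) ∂P := by
        rw [hΦX']
        ring

lemma lintegral_lintegral_one_sub_cos_inner [SFinite ρ] (P : Measure Ω) [SFinite P]
    {Z : Ω → EuclideanSpace ℝ (Fin d)} (hZ : Measurable Z) :
    ∫⁻ s, ∫⁻ ω, ENNReal.ofReal (1 - Real.cos ⟪s, Z ω⟫) ∂P ∂ρ = ∫⁻ ω, levyCndf ρ (Z ω) ∂P := by
  rw [lintegral_lintegral_swap (by fun_prop)]
  simp only [levyCndf, real_inner_comm]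

end Levy

section Covariance

variable {Ω : Type*} [MeasurableSpace Ω] {P : Measure Ω}

lemma ENNReal.lintegral_mul_sq_le {f g : Ω → ℝ≥0∞} (hf : AEMeasurable f P)
    (hg : AEMeasurable g P) :
    (∫⁻ ω, f ω * g ω ∂P) ^ 2 ≤ (∫⁻ ω, f ω ^ 2 ∂P) * ∫⁻ ω, g ω ^ 2 ∂P := by
  have hholder := lintegral_mul_norm_pow_le (hf.pow_const 2) (hg.pow_const 2)
    (p := 1 / 2) (q := 1 / 2) (by norm_num) (by norm_num) (by norm_num)
  have hsqrt (x : ℝ≥0∞) : (x ^ 2) ^ (1 / 2 : ℝ) = x := by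
    rw [← ENNReal.rpow_natCast, ← ENNReal.rpow_mul]; norm_num
  simp only [hsqrt] at hholder
  calc (∫⁻ ω, f ω * g ω ∂P) ^ 2
      ≤ ((∫⁻ ω, f ω ^ 2 ∂P) ^ (1 / 2 : ℝ) * (∫⁻ ω, g ω ^ 2 ∂P) ^ (1 / 2 : ℝ)) ^ 2 :=
        pow_le_pow_left₀ (zero_le ..) hholder 2
    _ = (∫⁻ ω, f ω ^ 2 ∂P) * ∫⁻ ω, g ω ^ 2 ∂P := by
        rw [mul_pow, ← ENNReal.rpow_natCast, ← ENNReal.rpow_natCast, ← ENNReal.rpow_mul,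
          ← ENNReal.rpow_mul]
        norm_num

variable [IsProbabilityMeasure P]

lemma integral_mul_sub_mul_integral {U V : Ω → ℂ} (hU : Integrable U P) (hV : Integrable V P)
    (hUV : Integrable (fun ω => U ω * V ω) P) :
    ∫ ω, U ω * V ω ∂P - (∫ ω, U ω ∂P) * ∫ ω, V ω ∂P
      = ∫ ω, (U ω - ∫ ω', U ω' ∂P) * (V ω - ∫ ω', V ω' ∂P) ∂P := by
  set a := ∫ ω, U ω ∂P
  set b := ∫ ω, V ω ∂P
  have hexpand (ω : Ω) : (U ω - a) * (V ω - b) = (U ω * V ω - a * V ω) - (U ω * b - a * b) := by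
    ring
  have hUV' : Integrable (fun ω => U ω * V ω - a * V ω) P := hUV.sub (hV.const_mul a)
  have hUb : Integrable (fun ω => U ω * b - a * b) P := (hU.mul_const b).sub (integrable_const _)
  simp_rw [hexpand]
  rw [integral_sub hUV' hUb, integral_sub hUV (hV.const_mul a),
    integral_sub (hU.mul_const b) (integrable_const _), integral_const_mul, integral_mul_const,
    integral_const, probReal_univ, one_smul]
  ring

lemma enorm_integral_mul_sub_sq_le {U V : Ω → ℂ} (hU : MemLp U 2 P) (hV : MemLp V 2 P) :
    ‖∫ ω, U ω * V ω ∂P - (∫ ω, U ω ∂P) * ∫ ω, V ω ∂P‖ₑ ^ 2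
      ≤ (∫⁻ ω, ‖U ω - ∫ ω', U ω' ∂P‖ₑ ^ 2 ∂P) * ∫⁻ ω, ‖V ω - ∫ ω', V ω' ∂P‖ₑ ^ 2 ∂P := by
  rw [integral_mul_sub_mul_integral (hU.integrable one_le_two) (hV.integrable one_le_two)
    (hU.integrable_mul hV)]
  calc _ ≤ (∫⁻ ω, ‖U ω - ∫ ω', U ω' ∂P‖ₑ * ‖V ω - ∫ ω', V ω' ∂P‖ₑ ∂P) ^ 2 := by
        gcongr
        exact (enorm_integral_le_lintegral_enorm _).trans_eq (by simp only [enorm_mul])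
    _ ≤ _ := ENNReal.lintegral_mul_sq_le
        (hU.1.sub aestronglyMeasurable_const).enorm (hV.1.sub aestronglyMeasurable_const).enorm

lemma lintegral_enorm_sub_integral_sq_of_norm_eq_one {U : Ω → ℂ}
    (hU : AEStronglyMeasurable U P) (hU1 : ∀ ω, ‖U ω‖ = 1) :
    ∫⁻ ω, ‖U ω - ∫ ω', U ω' ∂P‖ₑ ^ 2 ∂P = ENNReal.ofReal (1 - ‖∫ ω, U ω ∂P‖ ^ 2) := by
  set a := ∫ ω, U ω ∂P with ha
  have hUint : Integrable U P := .of_bound hU 1 (ae_of_all _ fun ω => (hU1 ω).le)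
  have hre : Integrable (fun ω => (U ω * starRingEnd ℂ a).re) P :=
    (hUint.mul_const _).re
  have hexpand (ω : Ω) : ‖U ω - a‖ ^ 2 = 1 + ‖a‖ ^ 2 - 2 * (U ω * starRingEnd ℂ a).re := by
    rw [Complex.sq_norm, Complex.sq_norm, Complex.normSq_sub, ← Complex.sq_norm, hU1]
    ring
  have hint : ∫ ω, ‖U ω - a‖ ^ 2 ∂P = 1 - ‖a‖ ^ 2 := by
    simp_rw [hexpand]
    have hre_int : ∫ ω, (U ω * starRingEnd ℂ a).re ∂P = ‖a‖ ^ 2 := by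
      simpa only [RCLike.re_to_complex, integral_mul_const, ← ha, Complex.mul_conj,
        Complex.ofReal_re, Complex.normSq_eq_norm_sq]
        using integral_re (hUint.mul_const (starRingEnd ℂ a))
    rw [integral_sub (integrable_const _) (hre.const_mul 2), integral_const, integral_const_mul,
      hre_int, probReal_univ, one_smul]
    ring
  have hsq : Integrable (fun ω => ‖U ω - a‖ ^ 2) P :=
    ((integrable_const _).sub (hre.const_mul 2)).congr (ae_of_all _ fun ω => (hexpand ω).symm)
  simp_rw [← ofReal_norm, ← ENNReal.ofReal_pow (norm_nonneg _)]
  rw [← ofReal_integral_eq_lintegral_ofReal hsq (ae_of_all _ fun ω => sq_nonneg _), hint]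

end Covariance

section CharFn

variable {Ω : Type*} [MeasurableSpace Ω] {P : Measure Ω} [IsProbabilityMeasure P] {d : ℕ}

lemma ofReal_one_sub_norm_charFn_sq {X X' : Ω → EuclideanSpace ℝ (Fin d)} (hX : Measurable X)
    (hX' : Measurable X') (hid : IdentDistrib X X' P P) (hind : IndepFun X X' P)
    (s : EuclideanSpace ℝ (Fin d)) :
    ENNReal.ofReal (1 - ‖charFn P X s‖ ^ 2)
      = ∫⁻ ω, ENNReal.ofReal (1 - Real.cos ⟪s, X ω - X' ω⟫) ∂P := by
  set e : EuclideanSpace ℝ (Fin d) → ℂ := fun x => Complex.exp (Complex.I * (⟪s, x⟫ : ℝ))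
  have he : Measurable e := by fun_prop
  have he_conj : Measurable fun x => starRingEnd ℂ (e x) := by fun_prop
  have hcos (ω : Ω) : Real.cos ⟪s, X ω - X' ω⟫ = (e (X ω) * starRingEnd ℂ (e (X' ω))).re := by
    simp only [e, ← Complex.exp_conj, ← Complex.exp_add, map_mul, Complex.conj_I,
      Complex.conj_ofReal, inner_sub_right]
    rw [← Complex.exp_ofReal_mul_I_re]
    push_cast
    ring_nf
  have hprod : ∫ ω, e (X ω) * starRingEnd ℂ (e (X' ω)) ∂P
      = charFn P X s * starRingEnd ℂ (charFn P X s) := by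
    have hX'X : ∫ ω, e (X' ω) ∂P = ∫ ω, e (X ω) ∂P := (hid.comp he).integral_eq.symm
    rw [hind.integral_fun_comp_mul_comp hX.aemeasurable hX'.aemeasurable
        he.aestronglyMeasurable he_conj.aestronglyMeasurable, integral_conj, hX'X]
    rfl
  have hprod_int : Integrable (fun ω => e (X ω) * starRingEnd ℂ (e (X' ω))) P :=
    .of_bound (by fun_prop) 1 (ae_of_all _ fun ω => by simp [e])
  have hcos_int : Integrable (fun ω => Real.cos ⟪s, X ω - X' ω⟫) P :=
    .of_bound (by fun_prop) 1 (ae_of_all _ fun ω => Real.abs_cos_le_one _)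
  have hcos_integral : ∫ ω, Real.cos ⟪s, X ω - X' ω⟫ ∂P = ‖charFn P X s‖ ^ 2 := by
    simp_rw [hcos]
    simpa only [RCLike.re_to_complex, hprod, Complex.mul_conj, Complex.ofReal_re,
      Complex.normSq_eq_norm_sq] using integral_re hprod_int
  have hone_sub_int : Integrable (fun ω => 1 - Real.cos ⟪s, X ω - X' ω⟫) P :=
    (integrable_const 1).sub hcos_int
  rw [← ofReal_integral_eq_lintegral_ofReal hone_sub_int
      (ae_of_all _ fun ω => sub_nonneg.2 (Real.cos_le_one _)),
    integral_sub (integrable_const 1) hcos_int, integral_const, probReal_univ, one_smul,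
    hcos_integral]

lemma enorm_jointCharFn_sub_mul_sq_le {m n : ℕ} {X : Ω → EuclideanSpace ℝ (Fin m)}
    {Y : Ω → EuclideanSpace ℝ (Fin n)} (hX : Measurable X) (hY : Measurable Y)
    (s : EuclideanSpace ℝ (Fin m)) (t : EuclideanSpace ℝ (Fin n)) :
    ‖jointCharFn P X Y s t - charFn P X s * charFn P Y t‖ₑ ^ 2
      ≤ ENNReal.ofReal (1 - ‖charFn P X s‖ ^ 2) * ENNReal.ofReal (1 - ‖charFn P Y t‖ ^ 2) := by
  set U : Ω → ℂ := fun ω => Complex.exp (Complex.I * (⟪s, X ω⟫ : ℝ))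
  set V : Ω → ℂ := fun ω => Complex.exp (Complex.I * (⟪t, Y ω⟫ : ℝ))
  have hU : AEStronglyMeasurable U P := by fun_prop
  have hV : AEStronglyMeasurable V P := by fun_prop
  have hU1 (ω : Ω) : ‖U ω‖ = 1 := by simp [U]
  have hV1 (ω : Ω) : ‖V ω‖ = 1 := by simp [V]
  have hjoint : jointCharFn P X Y s t = ∫ ω, U ω * V ω ∂P := by
    simp only [jointCharFn, U, V, Complex.ofReal_add, mul_add, Complex.exp_add]
  have hcharX : charFn P X s = ∫ ω, U ω ∂P := rfl
  have hcharY : charFn P Y t = ∫ ω, V ω ∂P := rfl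
  rw [hjoint, hcharX, hcharY, ← lintegral_enorm_sub_integral_sq_of_norm_eq_one hU hU1,
    ← lintegral_enorm_sub_integral_sq_of_norm_eq_one hV hV1]
  exact enorm_integral_mul_sub_sq_le (.of_bound hU 1 (ae_of_all _ fun ω => (hU1 ω).le))
    (.of_bound hV 1 (ae_of_all _ fun ω => (hV1 ω).le))

end CharFn

lemma gdCov_le_lintegral_levyCndf_sub_mul {m n : ℕ}
    (μ : Measure (EuclideanSpace ℝ (Fin m))) (ν : Measure (EuclideanSpace ℝ (Fin n)))
    [SFinite μ] [SFinite ν] {Ω : Type*} [MeasurableSpace Ω] (P : Measure Ω)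
    [IsProbabilityMeasure P]
    {X X' : Ω → EuclideanSpace ℝ (Fin m)} {Y Y' : Ω → EuclideanSpace ℝ (Fin n)}
    (hX : Measurable X) (hX' : Measurable X') (hY : Measurable Y) (hY' : Measurable Y')
    (hidX : IdentDistrib X X' P P) (hindX : IndepFun X X' P)
    (hidY : IdentDistrib Y Y' P P) (hindY : IndepFun Y Y' P) :
    gdCov μ ν P X Y
      ≤ (∫⁻ ω, levyCndf μ (X ω - X' ω) ∂P) * ∫⁻ ω, levyCndf ν (Y ω - Y' ω) ∂P := by
  calc gdCov μ ν P X Y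
      ≤ ∫⁻ s, ∫⁻ t, (∫⁻ ω, ENNReal.ofReal (1 - Real.cos ⟪s, X ω - X' ω⟫) ∂P)
          * ∫⁻ ω, ENNReal.ofReal (1 - Real.cos ⟪t, Y ω - Y' ω⟫) ∂P ∂ν ∂μ := by
        refine lintegral_mono fun s => lintegral_mono fun t => ?_
        rw [← ofReal_one_sub_norm_charFn_sq hX hX' hidX hindX,
          ← ofReal_one_sub_norm_charFn_sq hY hY' hidY hindY]
        exact enorm_jointCharFn_sub_mul_sq_le hX hY s t
    _ = _ := by
        rw [lintegral_lintegral_mul (by fun_prop) (by fun_prop),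
          lintegral_lintegral_one_sub_cos_inner P (Z := fun ω => X ω - X' ω) (by fun_prop),
          lintegral_lintegral_one_sub_cos_inner P (Z := fun ω => Y ω - Y' ω) (by fun_prop)]

theorem gdCov_le_moment_bound_general {m n : ℕ}
    (μ : Measure (EuclideanSpace ℝ (Fin m))) (ν : Measure (EuclideanSpace ℝ (Fin n)))
    (hμLevy : IsLevyMeasure μ)
    (hνLevy : IsLevyMeasure ν)
    {Ω : Type*} [MeasurableSpace Ω] (P : Measure Ω) [IsProbabilityMeasure P]
    (X X' : Ω → EuclideanSpace ℝ (Fin m)) (Y Y' : Ω → EuclideanSpace ℝ (Fin n))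
    (hX : Measurable X) (hX' : Measurable X') (hY : Measurable Y) (hY' : Measurable Y')
    (hidX : IdentDistrib X X' P P) (hindX : IndepFun X X' P)
    (hidY : IdentDistrib Y Y' P P) (hindY : IndepFun Y Y' P) :
    gdCov μ ν P X Y
        ≤ (∫⁻ ω, levyCndf μ (X ω - X' ω) ∂P) * (∫⁻ ω, levyCndf ν (Y ω - Y' ω) ∂P) ∧
      (∫⁻ ω, levyCndf μ (X ω - X' ω) ∂P) * (∫⁻ ω, levyCndf ν (Y ω - Y' ω) ∂P)
        ≤ 16 * ((∫⁻ ω, levyCndf μ (X ω) ∂P) * ∫⁻ ω, levyCndf ν (Y ω) ∂P) := by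
  have := hμLevy.sigmaFinite
  have := hνLevy.sigmaFinite
  refine ⟨gdCov_le_lintegral_levyCndf_sub_mul μ ν P hX hX' hY hY' hidX hindX hidY hindY, ?_⟩
  calc (∫⁻ ω, levyCndf μ (X ω - X' ω) ∂P) * (∫⁻ ω, levyCndf ν (Y ω - Y' ω) ∂P)
      ≤ (4 * ∫⁻ ω, levyCndf μ (X ω) ∂P) * (4 * ∫⁻ ω, levyCndf ν (Y ω) ∂P) :=
        mul_le_mul' (lintegral_levyCndf_sub_le hX hX' hidX) (lintegral_levyCndf_sub_le hY hY' hidY)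
    _ = 16 * ((∫⁻ ω, levyCndf μ (X ω) ∂P) * ∫⁻ ω, levyCndf ν (Y ω) ∂P) := by ring

/-- Let `X, X'` be i.i.d. on `ℝ^m`, `Y, Y'` i.i.d. on `ℝ^n`, and `μ, ν` symmetric Lévy
measures with full support and associated cndfs `Φ, Ψ`. Then, in `[0,∞]`,
`V²(X,Y) ≤ E[Φ(X - X')] · E[Ψ(Y - Y')] ≤ 16 E[Φ(X)] · E[Ψ(Y)]`. -/
theorem gdCov_le_moment_bound {m n : ℕ}
    (μ : Measure (EuclideanSpace ℝ (Fin m))) (ν : Measure (EuclideanSpace ℝ (Fin n)))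
    (hμLevy : IsLevyMeasure μ) (hμsym : IsSymmetricMeasure μ)
    (hμfull : HasFullSupportOffZero μ)
    (hνLevy : IsLevyMeasure ν) (hνsym : IsSymmetricMeasure ν)
    (hνfull : HasFullSupportOffZero ν)
    {Ω : Type*} [MeasurableSpace Ω] (P : Measure Ω) [IsProbabilityMeasure P]
    (X X' : Ω → EuclideanSpace ℝ (Fin m)) (Y Y' : Ω → EuclideanSpace ℝ (Fin n))
    (hX : Measurable X) (hX' : Measurable X') (hY : Measurable Y) (hY' : Measurable Y')
    (hidX : IdentDistrib X X' P P) (hindX : IndepFun X X' P)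
    (hidY : IdentDistrib Y Y' P P) (hindY : IndepFun Y Y' P) :
    gdCov μ ν P X Y
        ≤ (∫⁻ ω, levyCndf μ (X ω - X' ω) ∂P) * (∫⁻ ω, levyCndf ν (Y ω - Y' ω) ∂P) ∧
      (∫⁻ ω, levyCndf μ (X ω - X' ω) ∂P) * (∫⁻ ω, levyCndf ν (Y ω - Y' ω) ∂P)
        ≤ 16 * ((∫⁻ ω, levyCndf μ (X ω) ∂P) * ∫⁻ ω, levyCndf ν (Y ω) ∂P) :=
  gdCov_le_moment_bound_general μ ν hμLevy hνLevy P X X' Y Y' hX hX' hY hY' hidX hindX hidY hindY
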